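/- arXiv:0807.4814 — 2 statements merged into one kernel-verified Lean document; each statement's English description precedes it below -/
import Mathlib

section
/- For any real y ≠ 0, the logarithmic potential of the measure on ℝ with Cauchy density x ↦ (1/π)|y|/(x^2+y^2) equals, at every point t ∈ ℝ, the logarithmic potential of the Dirac mass at iy: ∫_ℝ log(1/|t-x|)·(1/π)·|y|/(x^2+y^2) dx = log(1/|t - iy|) = -(1/2)·log(t^2 + y^2). -/
/-!
The substitution `x = Y tan θ` turns the Cauchy weight `|Y| / (x² + Y²) dx` into `dθ` on
`(-π/2, π/2)`. Writing `z = t - i y = ‖z‖ e^{iφ}`, one has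
`t + y tan θ = ‖z‖ cos (θ + φ) / cos θ`, so `log |t - x|` becomes
`log ‖z‖ + log |cos (θ + φ)| - log |cos θ|`; the last two terms have equal integrals because
`log |cos|` is `π`-periodic and integrable, leaving `π log ‖z‖`.
-/

open MeasureTheory Real
open Set intervalIntegral
open scoped Interval

theorem periodic_log_cos : Function.Periodic (log ∘ cos) π := fun x => by
  simp [cos_add_pi]

theorem integral_log_cos_add (a φ : ℝ) :
    ∫ θ in a..a + π, log (cos (θ + φ)) = ∫ θ in a..a + π, log (cos θ) := by
  rw [integral_comp_add_right (fun θ => log (cos θ)), add_right_comm]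
  exact periodic_log_cos.intervalIntegral_add_eq (a + φ) a

theorem ae_cos_add_ne_zero (φ : ℝ) : ∀ᵐ θ : ℝ, cos (θ + φ) ≠ 0 := by
  refine measure_mono_null (fun θ hθ => ?_) ((countable_range fun k : ℤ =>
    (2 * k + 1) * π / 2 - φ).measure_zero volume)
  obtain ⟨k, hk⟩ := cos_eq_zero_iff.1 (not_not.1 hθ)
  exact ⟨k, by linarith⟩

theorem re_sub_im_mul_tan_eq (z : ℂ) {θ : ℝ} (hθ : cos θ ≠ 0) :
    z.re - z.im * tan θ = ‖z‖ * cos (θ + z.arg) / cos θ := by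
  rw [← Complex.norm_mul_cos_arg, ← Complex.norm_mul_sin_arg, tan_eq_sin_div_cos, cos_add]
  field_simp

theorem integral_log_re_sub_im_mul_tan (z : ℂ) :
    ∫ θ in -(π / 2)..π / 2, log (z.re - z.im * tan θ) = π * log ‖z‖ := by
  rcases eq_or_ne z 0 with rfl | hz
  · simp
  have hlog : ∀ᵐ θ : ℝ, θ ∈ Ι (-(π / 2)) (π / 2) →
      log (z.re - z.im * tan θ) = log ‖z‖ + log (cos (θ + z.arg)) - log (cos θ) := by
    filter_upwards [ae_cos_add_ne_zero z.arg, ae_cos_add_ne_zero 0] with θ hφ h0 _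
    rw [add_zero] at h0
    rw [re_sub_im_mul_tan_eq z h0, log_div (mul_ne_zero (norm_ne_zero_iff.2 hz) hφ) h0,
      log_mul (norm_ne_zero_iff.2 hz) hφ]
  have hshift := integral_log_cos_add (-(π / 2)) z.arg
  rw [show -(π / 2) + π = π / 2 by ring] at hshift
  have hcos : IntervalIntegrable (fun θ => log (cos θ)) volume (-(π / 2)) (π / 2) :=
    intervalIntegrable_log_cos
  have hcos_add :
      IntervalIntegrable (fun θ => log (cos (θ + z.arg))) volume (-(π / 2)) (π / 2) := by
    simpa using (intervalIntegrable_log_cos (a := -(π / 2) + z.arg)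
      (b := π / 2 + z.arg)).comp_add_right z.arg
  rw [integral_congr_ae hlog,
    intervalIntegral.integral_sub (intervalIntegrable_const.add hcos_add) hcos,
    intervalIntegral.integral_add intervalIntegrable_const hcos_add, hshift]
  simp

theorem integral_abs_div_sq_add_sq_smul_eq_integral_tan {E : Type*} [NormedAddCommGroup E]
    [NormedSpace ℝ E] {Y : ℝ} (hY : Y ≠ 0) (f : ℝ → E) :
    ∫ x, (|Y| / (x ^ 2 + Y ^ 2)) • f x = ∫ θ in -(π / 2)..π / 2, f (Y * tan θ) := by
  have himage : (fun θ => Y * tan θ) '' Ioo (-(π / 2)) (π / 2) = univ := by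
    rw [← image_image (Y * ·), image_tan_Ioo,
      image_univ_of_surjective (mul_left_surjective₀ hY)]
  have hderiv : ∀ θ ∈ Ioo (-(π / 2)) (π / 2),
      HasDerivWithinAt (fun θ => Y * tan θ) (Y * (1 / cos θ ^ 2))
        (Ioo (-(π / 2)) (π / 2)) θ :=
    fun θ hθ => ((hasDerivAt_tan (cos_pos_of_mem_Ioo hθ).ne').const_mul Y).hasDerivWithinAt
  have hinj : InjOn (fun θ => Y * tan θ) (Ioo (-(π / 2)) (π / 2)) :=
    fun a ha b hb hab => injOn_tan ha hb (mul_left_cancel₀ hY hab)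
  rw [← setIntegral_univ, ← himage,
    integral_image_eq_integral_abs_deriv_smul measurableSet_Ioo hderiv hinj,
    integral_of_le (by linarith [pi_pos]), integral_Ioc_eq_integral_Ioo]
  refine setIntegral_congr_fun measurableSet_Ioo fun θ hθ => ?_
  have hcos := (cos_pos_of_mem_Ioo hθ).ne'
  have hden : (Y * tan θ) ^ 2 + Y ^ 2 = Y ^ 2 / cos θ ^ 2 := by
    rw [tan_eq_sin_div_cos]
    field_simp
    exact sin_sq_add_cos_sq θ
  rw [smul_smul, hden, abs_mul, abs_of_pos (by positivity : 0 < 1 / cos θ ^ 2)]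
  convert one_smul ℝ (f (Y * tan θ))
  field_simp
  rw [sq_abs]

theorem stmt3 (y : ℝ) (hy : y ≠ 0) (t : ℝ) :
    (∫ x : ℝ, Real.log (1 / |t - x|) * ((1 / π) * |y| / (x ^ 2 + y ^ 2)))
      = Real.log (1 / ‖(t : ℂ) - Complex.I * y‖) ∧
    Real.log (1 / ‖(t : ℂ) - Complex.I * y‖)
      = -(1/2) * Real.log (t ^ 2 + y ^ 2) := by
  set z : ℂ := t - Complex.I * y
  have hre : z.re = t := by simp [z]
  have him : z.im = -y := by simp [z]
  have hnorm : ‖z‖ = √(t ^ 2 + y ^ 2) := by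
    rw [Complex.norm_def, Complex.normSq_apply, hre, him]
    ring_nf
  refine ⟨?_, by rw [hnorm, one_div, log_inv, log_sqrt (by positivity)]; ring⟩
  calc (∫ x : ℝ, log (1 / |t - x|) * ((1 / π) * |y| / (x ^ 2 + y ^ 2)))
      = ∫ x : ℝ, (|z.im| / (x ^ 2 + z.im ^ 2)) • (-π⁻¹ * log (z.re - x)) := by
        congr 1 with x
        rw [hre, him, abs_neg, neg_sq, one_div, log_inv, log_abs, smul_eq_mul]
        ring
    _ = ∫ θ in -(π / 2)..π / 2, -π⁻¹ * log (z.re - z.im * tan θ) :=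
        integral_abs_div_sq_add_sq_smul_eq_integral_tan (by simpa [him] using hy) _
    _ = log (1 / ‖z‖) := by
        rw [intervalIntegral.integral_const_mul, integral_log_re_sub_im_mul_tan, one_div, log_inv]
        field_simp
end

section
/- Let c > 0 and y ∈ (-c, c). Then the function on K_c = {it : |t| ≥ c} with density (1/π)·√(c²-y²) / (|z - iy|·√(|z|²-c²)) with respect to arclength is a probability density: (1/π)·∫_{|t|≥c} √(c²-y²) / (|t-y|·√(t²-c²)) dt = 1. -/
/-!
On `(c, ∞)` the integrand `√(c² - y²) / ((t - y) √(t² - c²))` has the antiderivative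
`-arcsin ((c² - y t) / (c (t - y)))`; the Möbius map inside the arcsine sends `c` to `1` and `∞`
to `-y / c`, so the integral over `(c, ∞)` is `π / 2 + arcsin (y / c)`. The reflection `t ↦ -t`
turns the integral over `(-∞, -c)` into the same one with `y` replaced by `-y`, and the two
arcsines cancel because `arcsin` is odd.
-/

open MeasureTheory Real Set Filter Topology

lemma one_sub_sq_div_sub_mul {c y x : ℝ} (hc : c ≠ 0) (hx : x ≠ y) :
    1 - ((c ^ 2 - y * x) / (c * (x - y))) ^ 2
      = (c ^ 2 - y ^ 2) * (x ^ 2 - c ^ 2) / (c * (x - y)) ^ 2 := by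
  have : x - y ≠ 0 := sub_ne_zero.mpr hx
  field_simp
  ring

lemma hasDerivAt_div_sub_mul {c y x : ℝ} (hc : c ≠ 0) (hx : x ≠ y) :
    HasDerivAt (fun x => (c ^ 2 - y * x) / (c * (x - y)))
      ((y ^ 2 - c ^ 2) / (c * (x - y) ^ 2)) x := by
  have hxy : x - y ≠ 0 := sub_ne_zero.mpr hx
  have hnum : HasDerivAt (fun x : ℝ => c ^ 2 - y * x) (-y) x := by
    simpa using ((hasDerivAt_id x).const_mul y).const_sub (c ^ 2)
  have hden : HasDerivAt (fun x : ℝ => c * (x - y)) c x := by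
    simpa using ((hasDerivAt_id x).sub_const y).const_mul c
  refine (hnum.div hden (mul_ne_zero hc hxy)).congr_deriv ?_
  field_simp
  ring

lemma tendsto_div_sub_mul_atTop {c : ℝ} (hc : c ≠ 0) (y : ℝ) :
    Tendsto (fun x => (c ^ 2 - y * x) / (c * (x - y))) atTop (𝓝 (-(y / c))) := by
  have heq : (fun x => -(y / c) + (c ^ 2 - y ^ 2) / c * (x - y)⁻¹)
      =ᶠ[atTop] fun x => (c ^ 2 - y * x) / (c * (x - y)) := by
    filter_upwards [eventually_gt_atTop y] with x hx
    have : x - y ≠ 0 := sub_ne_zero.mpr hx.ne'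
    field_simp
    ring
  have hinv : Tendsto (fun x : ℝ => (x - y)⁻¹) atTop (𝓝 0) :=
    (tendsto_atTop_add_const_right atTop (-y) tendsto_id).inv_tendsto_atTop
  refine Tendsto.congr' heq ?_
  simpa using (hinv.const_mul ((c ^ 2 - y ^ 2) / c)).const_add (-(y / c))

section

variable {c y : ℝ} (hy1 : -c < y) (hy2 : y < c)
include hy1 hy2

lemma hasDerivAt_neg_arcsin_div_sub_mul {x : ℝ} (hx : c < x) :
    HasDerivAt (fun x => -arcsin ((c ^ 2 - y * x) / (c * (x - y))))
      (√(c ^ 2 - y ^ 2) / ((x - y) * √(x ^ 2 - c ^ 2))) x := by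
  have hc : 0 < c := by linarith
  have hxy : 0 < x - y := by linarith
  have hA : 0 < c ^ 2 - y ^ 2 := by nlinarith
  have hB : 0 < x ^ 2 - c ^ 2 := by nlinarith
  have hsq := one_sub_sq_div_sub_mul (y := y) hc.ne' (x := x) (by linarith)
  have hpos : 0 < 1 - ((c ^ 2 - y * x) / (c * (x - y))) ^ 2 := by rw [hsq]; positivity
  have hne_one : (c ^ 2 - y * x) / (c * (x - y)) ≠ 1 := by
    intro h; rw [h] at hpos; norm_num at hpos
  have hne_neg_one : (c ^ 2 - y * x) / (c * (x - y)) ≠ -1 := by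
    intro h; rw [h] at hpos; norm_num at hpos
  have hsqrt : √(1 - ((c ^ 2 - y * x) / (c * (x - y))) ^ 2)
      = √(c ^ 2 - y ^ 2) * √(x ^ 2 - c ^ 2) / (c * (x - y)) := by
    rw [hsq, sqrt_div (by positivity), sqrt_mul hA.le, sqrt_sq (by positivity)]
  refine (((hasDerivAt_arcsin hne_neg_one hne_one).comp x
    (hasDerivAt_div_sub_mul hc.ne' (by linarith))).neg).congr_deriv ?_
  rw [hsqrt]
  have hAs : 0 < √(c ^ 2 - y ^ 2) := sqrt_pos.mpr hA
  have hBs : 0 < √(x ^ 2 - c ^ 2) := sqrt_pos.mpr hB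
  have hA2 : √(c ^ 2 - y ^ 2) ^ 2 = c ^ 2 - y ^ 2 := sq_sqrt hA.le
  field_simp
  linear_combination -hA2

lemma integral_Ioi_sqrt_div_sub_mul_sqrt :
    ∫ t in Ioi c, √(c ^ 2 - y ^ 2) / ((t - y) * √(t ^ 2 - c ^ 2)) = π / 2 + arcsin (y / c) := by
  have hc : 0 < c := by linarith
  have hcy : c * (c - y) ≠ 0 := by nlinarith
  have hcont : ContinuousWithinAt (fun x => -arcsin ((c ^ 2 - y * x) / (c * (x - y))))
      (Ici c) c :=
    (continuous_arcsin.continuousAt.comp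
      ((by fun_prop : ContinuousAt (fun x => c ^ 2 - y * x) c).div (by fun_prop)
        hcy)).neg.continuousWithinAt
  have hlim : Tendsto (fun x => -arcsin ((c ^ 2 - y * x) / (c * (x - y)))) atTop
      (𝓝 (arcsin (y / c))) := by
    simpa [arcsin_neg] using
      (continuous_arcsin.continuousAt.tendsto.comp (tendsto_div_sub_mul_atTop hc.ne' y)).neg
  have hnonneg : ∀ x ∈ Ioi c, 0 ≤ √(c ^ 2 - y ^ 2) / ((x - y) * √(x ^ 2 - c ^ 2)) := by
    intro x hx
    have : 0 < x - y := by linarith [mem_Ioi.mp hx]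
    positivity
  have hat_c : (c ^ 2 - y * c) / (c * (c - y)) = 1 := by
    rw [div_eq_one_iff_eq hcy]; ring
  rw [integral_Ioi_of_hasDerivAt_of_nonneg hcont
    (fun x hx => hasDerivAt_neg_arcsin_div_sub_mul hy1 hy2 (mem_Ioi.mp hx)) hnonneg hlim,
    hat_c, arcsin_one]
  ring

end

theorem stmt19_general (c y : ℝ) (hy1 : -c < y) (hy2 : y < c) :
    (∫ t in Set.Iio (-c), Real.sqrt (c ^ 2 - y ^ 2) / ((y - t) * Real.sqrt (t ^ 2 - c ^ 2)))
      + (∫ t in Set.Ioi c, Real.sqrt (c ^ 2 - y ^ 2) / ((t - y) * Real.sqrt (t ^ 2 - c ^ 2)))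
      = π := by
  have hreflect : ∫ t in Iio (-c), √(c ^ 2 - y ^ 2) / ((y - t) * √(t ^ 2 - c ^ 2))
      = ∫ t in Ioi c, √(c ^ 2 - (-y) ^ 2) / ((t - -y) * √(t ^ 2 - c ^ 2)) := by
    rw [← integral_Iic_eq_integral_Iio,
      ← integral_comp_neg_Ioi c (fun t => √(c ^ 2 - y ^ 2) / ((y - t) * √(t ^ 2 - c ^ 2)))]
    refine setIntegral_congr_fun measurableSet_Ioi fun x _ => ?_
    simp only [neg_sq, sub_neg_eq_add, add_comm y]
  rw [hreflect, integral_Ioi_sqrt_div_sub_mul_sqrt (by linarith) (by linarith),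
    integral_Ioi_sqrt_div_sub_mul_sqrt hy1 hy2, neg_div, arcsin_neg]
  ring

theorem stmt19 (c y : ℝ) (hc : 0 < c) (hy1 : -c < y) (hy2 : y < c) :
    (∫ t in Set.Iio (-c), Real.sqrt (c ^ 2 - y ^ 2) / ((y - t) * Real.sqrt (t ^ 2 - c ^ 2)))
      + (∫ t in Set.Ioi c, Real.sqrt (c ^ 2 - y ^ 2) / ((t - y) * Real.sqrt (t ^ 2 - c ^ 2)))
      = π :=
  stmt19_general c y hy1 hy2
end
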